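/- arXiv:1607.05780 — 4 statements merged into one kernel-verified Lean document; each statement's English description precedes it below -/
import Mathlib

section
/- Suppose U, V, Λ ∈ K^{n×n} satisfy the block equation H[U;V] − [δ_f(U); δ_f(V)] = [U;V]Λ where H = [[A, −R],[−Q, −Aᵀ]], and U is invertible. Then X := V U^{−1} solves the differential Riccati equation δ_f(X) + XA + AᵀX − XRX = −Q. -/
open Matrix

namespace Matrix

section Leibniz

variable {m R : Type*} [Fintype m] [DecidableEq m] [CommRing R] {δ : R → R}
  (hLeib : ∀ A B : Matrix m m R, (A * B).map δ = A.map δ * B + A * B.map δ)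
include hLeib

theorem map_one_eq_zero_of_leibniz : (1 : Matrix m m R).map δ = 0 := by
  have h := hLeib 1 1
  rw [mul_one, one_mul, mul_one, left_eq_add] at h
  exact h

theorem map_nonsing_inv_of_leibniz {U : Matrix m m R} (hU : IsUnit U.det) :
    U⁻¹.map δ = -(U⁻¹ * U.map δ * U⁻¹) := by
  have hsum : U.map δ * U⁻¹ + U * U⁻¹.map δ = 0 := by
    rw [← hLeib, mul_nonsing_inv U hU, map_one_eq_zero_of_leibniz hLeib]
  calc U⁻¹.map δ = U⁻¹ * (U * U⁻¹.map δ) := by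
        rw [← mul_assoc, nonsing_inv_mul U hU, one_mul]
    _ = -(U⁻¹ * U.map δ * U⁻¹) := by rw [eq_neg_of_add_eq_zero_right hsum]; noncomm_ring

theorem map_mul_nonsing_inv_of_leibniz (V : Matrix m m R) {U : Matrix m m R}
    (hU : IsUnit U.det) :
    (V * U⁻¹).map δ = V.map δ * U⁻¹ - V * U⁻¹ * U.map δ * U⁻¹ := by
  rw [hLeib, map_nonsing_inv_of_leibniz hLeib hU]
  noncomm_ring

end Leibniz

end Matrix

theorem stmt_8_general {K : Type*} [Field K] {n : ℕ} (δ : K → K)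
    (hLeib : ∀ A B : Matrix (Fin n) (Fin n) K,
      (A * B).map δ = A.map δ * B + A * B.map δ)
    (A R Q : Matrix (Fin n) (Fin n) K)
    (U V Λ : Matrix (Fin n) (Fin n) K) (hU : IsUnit U.det)
    (hblk1 : A * U - R * V - U.map δ = U * Λ)
    (hblk2 : -(Q * U) - Aᵀ * V - V.map δ = V * Λ) :
    (V * U⁻¹).map δ + (V * U⁻¹) * A + Aᵀ * (V * U⁻¹)
      - (V * U⁻¹) * R * (V * U⁻¹) = -Q := by
  have hdU : U.map δ = A * U - R * V - U * Λ := by rw [← hblk1]; abel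
  have hdV : V.map δ = -(Q * U) - Aᵀ * V - V * Λ := by rw [← hblk2]; abel
  -- the `Λ`-terms `V Λ U⁻¹` coming from `δ V` and from `δ U` cancel
  calc (V * U⁻¹).map δ + (V * U⁻¹) * A + Aᵀ * (V * U⁻¹)
        - (V * U⁻¹) * R * (V * U⁻¹)
      = -Q * (U * U⁻¹) + V * U⁻¹ * A * (1 - U * U⁻¹)
        + V * (U⁻¹ * U - 1) * Λ * U⁻¹ := by
        rw [map_mul_nonsing_inv_of_leibniz hLeib V hU, hdU, hdV]; noncomm_ring
    _ = -Q := by simp [mul_nonsing_inv U hU, nonsing_inv_mul U hU]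

/-- if `[U; V]` spans an `H`-invariant subspace (block equation
with matrix `Λ`) and `U` is invertible, then `X := V U⁻¹` solves the
differential Riccati equation `δ_f(X) + XA + AᵀX − XRX = −Q`. -/
theorem stmt_8 {K : Type*} [Field K] {n : ℕ} (δ : K → K)
    (hLeib : ∀ A B : Matrix (Fin n) (Fin n) K,
      (A * B).map δ = A.map δ * B + A * B.map δ)
    (hone : (1 : Matrix (Fin n) (Fin n) K).map δ = 0)
    (A R Q : Matrix (Fin n) (Fin n) K) (hR : R.IsSymm) (hQ : Q.IsSymm)
    (U V Λ : Matrix (Fin n) (Fin n) K) (hU : IsUnit U.det)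
    (hblk1 : A * U - R * V - U.map δ = U * Λ)
    (hblk2 : -(Q * U) - Aᵀ * V - V.map δ = V * Λ) :
    (V * U⁻¹).map δ + (V * U⁻¹) * A + Aᵀ * (V * U⁻¹)
      - (V * U⁻¹) * R * (V * U⁻¹) = -Q :=
  stmt_8_general δ hLeib A R Q U V Λ hU hblk1 hblk2
end

section
/- A matrix M ∈ K^{n×n} is right simple (possesses n right eigenvectors spanning K^n) if and only if M is δ_f-conjugate to a diagonal matrix; similarly M is left simple if and only if M is δ_f-conjugate to a diagonal matrix. Consequently, M is right simple if and only if it is left simple. -/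
open Matrix

/-- `M` is right simple: `n` right eigenvectors spanning `K^n`. -/
def RightSimple {K : Type*} [Field K] {n : ℕ} (δ : K → K)
    (M : Matrix (Fin n) (Fin n) K) : Prop :=
  ∃ (w : Fin n → (Fin n → K)) (β : Fin n → K),
    (∀ k, w k ≠ 0 ∧ M.mulVec (w k) - (fun i => δ (w k i)) = β k • w k) ∧
    Submodule.span K (Set.range w) = ⊤

/-- `M` is left simple: `n` left eigenvectors spanning `K^n`. -/
def LeftSimple {K : Type*} [Field K] {n : ℕ} (δ : K → K)
    (M : Matrix (Fin n) (Fin n) K) : Prop :=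
  ∃ (v : Fin n → (Fin n → K)) (α : Fin n → K),
    (∀ k, v k ≠ 0 ∧ Matrix.vecMul (v k) M + (fun i => δ (v k i)) = α k • v k) ∧
    Submodule.span K (Set.range v) = ⊤

/-- `M` is `δ_f`-conjugate to a diagonal matrix. -/
def ConjToDiagonal {K : Type*} [Field K] {n : ℕ} (δ : K → K)
    (M : Matrix (Fin n) (Fin n) K) : Prop :=
  ∃ (T : Matrix (Fin n) (Fin n) K) (d : Fin n → K),
    IsUnit T.det ∧ M = (T * Matrix.diagonal d + T.map δ) * T⁻¹

/-!
Columns of an invertible matrix `T` form a basis of right eigenvectors with eigenvalues `d`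
exactly when `M T = T D + δ(T)` with `D = diagonal d`, i.e. `M = (T D + δ(T)) T⁻¹`; dually, rows
of an invertible `S` form a basis of left eigenvectors exactly when `S M + δ(S) = D S`. The
Leibniz rule gives `δ(T⁻¹) = -T⁻¹ δ(T) T⁻¹`, and with it the substitution `S = T⁻¹` turns
either equation into the other.
-/

namespace Matrix

variable {R : Type*} {l m n : Type*} (δ : R → R)

theorem map_mul_of_leibniz [Ring R] [Fintype m] (hadd : ∀ a b : R, δ (a + b) = δ a + δ b)
    (hmul : ∀ a b : R, δ (a * b) = δ a * b + a * δ b) (A : Matrix l m R) (B : Matrix m n R) :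
    (A * B).map δ = A.map δ * B + A * B.map δ := by
  ext i k
  simp only [map_apply, mul_apply, add_apply, ← Finset.sum_add_distrib, ← hmul]
  exact map_sum (AddMonoidHom.mk' δ hadd) _ _

theorem map_one_of_leibniz [Ring R] [DecidableEq n]
    (hmul : ∀ a b : R, δ (a * b) = δ a * b + a * δ b) :
    (1 : Matrix n n R).map δ = 0 := by
  have h0 : δ 0 = 0 := by simpa using hmul 0 0
  have h1 : δ 1 = 0 := by simpa using hmul 1 1
  ext i j
  by_cases h : i = j <;> simp [h, h0, h1]

theorem map_nonsing_inv_of_leibniz_s12 [CommRing R] [Fintype n] [DecidableEq n]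
    (hadd : ∀ a b : R, δ (a + b) = δ a + δ b)
    (hmul : ∀ a b : R, δ (a * b) = δ a * b + a * δ b) {T : Matrix n n R} (hT : IsUnit T.det) :
    T⁻¹.map δ = -(T⁻¹ * T.map δ * T⁻¹) := by
  have h : T.map δ * T⁻¹ + T * T⁻¹.map δ = 0 := by
    rw [← map_mul_of_leibniz δ hadd hmul, mul_nonsing_inv _ hT, map_one_of_leibniz δ hmul]
  calc T⁻¹.map δ = T⁻¹ * (T * T⁻¹.map δ) := by
        rw [← Matrix.mul_assoc, nonsing_inv_mul _ hT, Matrix.one_mul]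
    _ = -(T⁻¹ * T.map δ * T⁻¹) := by
        rw [eq_neg_of_add_eq_zero_right h, Matrix.mul_neg, Matrix.mul_assoc]

theorem span_range_row_eq_top_iff [CommRing R] [Fintype n] [DecidableEq n] {A : Matrix n n R} :
    Submodule.span R (Set.range A.row) = ⊤ ↔ IsUnit A := by
  rw [← range_vecMulLinear, LinearMap.range_eq_top, coe_vecMulLinear, vecMul_surjective_iff_isUnit]

theorem span_range_col_eq_top_iff [CommRing R] [Fintype n] [DecidableEq n] {A : Matrix n n R} :
    Submodule.span R (Set.range A.col) = ⊤ ↔ IsUnit A := by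
  rw [← row_transpose, span_range_row_eq_top_iff, isUnit_transpose]

theorem mul_eq_mul_diagonal_add_map_iff [CommRing R] [Fintype m] [Fintype n] [DecidableEq n]
    (M : Matrix m m R) (T : Matrix m n R) (d : n → R) :
    M * T = T * diagonal d + T.map δ ↔
      ∀ k, M *ᵥ T.col k - (fun i => δ (T.col k i)) = d k • T.col k := by
  rw [← Matrix.ext_iff, forall_comm]
  refine forall_congr' fun k => ?_
  rw [funext_iff]
  refine forall_congr' fun i => ?_
  simp only [mul_diagonal, add_apply, map_apply, Pi.sub_apply, Pi.smul_apply, smul_eq_mul,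
    col_apply]
  rw [sub_eq_iff_eq_add, mul_comm]
  rfl

theorem mul_add_map_eq_diagonal_mul_iff [CommRing R] [Fintype m] [Fintype n] [DecidableEq n]
    (M : Matrix m m R) (S : Matrix n m R) (d : n → R) :
    S * M + S.map δ = diagonal d * S ↔
      ∀ k, S.row k ᵥ* M + (fun j => δ (S.row k j)) = d k • S.row k := by
  rw [← Matrix.ext_iff]
  refine forall_congr' fun k => ?_
  rw [funext_iff]
  refine forall_congr' fun j => ?_
  simp only [diagonal_mul, add_apply, map_apply, Pi.add_apply, Pi.smul_apply, smul_eq_mul,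
    row_apply]
  rfl

theorem mul_nonsing_inv_eq_iff_of_leibniz [CommRing R] [Fintype n] [DecidableEq n]
    (hadd : ∀ a b : R, δ (a + b) = δ a + δ b)
    (hmul : ∀ a b : R, δ (a * b) = δ a * b + a * δ b) {T : Matrix n n R} (hT : IsUnit T.det)
    (M D : Matrix n n R) :
    M * T⁻¹ = T⁻¹ * D + T⁻¹.map δ ↔ T * M + T.map δ = D * T := by
  have hU : IsUnit T⁻¹ := isUnit_nonsing_inv_iff.mpr ((isUnit_iff_isUnit_det T).mpr hT)
  calc M * T⁻¹ = T⁻¹ * D + T⁻¹.map δ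
        ↔ T⁻¹ * (T * M) * T⁻¹ = T⁻¹ * (D * T - T.map δ) * T⁻¹ := by
          rw [map_nonsing_inv_of_leibniz_s12 δ hadd hmul hT, ← Matrix.mul_assoc,
            nonsing_inv_mul _ hT, Matrix.one_mul, Matrix.mul_sub, Matrix.sub_mul,
            ← Matrix.mul_assoc, Matrix.mul_assoc (T⁻¹ * D), mul_nonsing_inv _ hT,
            Matrix.mul_one, sub_eq_add_neg]
    _ ↔ T * M = D * T - T.map δ := by rw [hU.mul_left_inj, hU.mul_right_inj]
    _ ↔ T * M + T.map δ = D * T := eq_sub_iff_add_eq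

end Matrix

section

variable {K : Type*} [Field K] {n : ℕ} (δ : K → K) (M : Matrix (Fin n) (Fin n) K)

theorem rightSimple_iff_exists_isUnit_mul_eq : RightSimple δ M ↔
    ∃ (T : Matrix (Fin n) (Fin n) K) (d : Fin n → K),
      IsUnit T ∧ M * T = T * diagonal d + T.map δ := by
  constructor
  · rintro ⟨w, β, hw, hspan⟩
    exact ⟨(of w)ᵀ, β, span_range_col_eq_top_iff.mp hspan,
      (mul_eq_mul_diagonal_add_map_iff δ M _ β).mpr fun k => (hw k).2⟩
  · rintro ⟨T, d, hT, hMT⟩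
    exact ⟨T.col, d, fun k => ⟨(linearIndependent_cols_of_isUnit hT).ne_zero k,
      (mul_eq_mul_diagonal_add_map_iff δ M T d).mp hMT k⟩, span_range_col_eq_top_iff.mpr hT⟩

theorem leftSimple_iff_exists_isUnit_mul_add_eq : LeftSimple δ M ↔
    ∃ (S : Matrix (Fin n) (Fin n) K) (d : Fin n → K),
      IsUnit S ∧ S * M + S.map δ = diagonal d * S := by
  constructor
  · rintro ⟨v, α, hv, hspan⟩
    exact ⟨of v, α, span_range_row_eq_top_iff.mp hspan,
      (mul_add_map_eq_diagonal_mul_iff δ M _ α).mpr fun k => (hv k).2⟩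
  · rintro ⟨S, d, hS, hSM⟩
    exact ⟨S.row, d, fun k => ⟨(linearIndependent_rows_of_isUnit hS).ne_zero k,
      (mul_add_map_eq_diagonal_mul_iff δ M S d).mp hSM k⟩, span_range_row_eq_top_iff.mpr hS⟩

theorem conjToDiagonal_iff_exists_isUnit_mul_eq : ConjToDiagonal δ M ↔
    ∃ (T : Matrix (Fin n) (Fin n) K) (d : Fin n → K),
      IsUnit T ∧ M * T = T * diagonal d + T.map δ := by
  refine exists_congr fun T => exists_congr fun d => ?_
  rw [← isUnit_iff_isUnit_det]
  refine and_congr_right fun hT => ?_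
  have hT' := (isUnit_iff_isUnit_det T).mp hT
  constructor
  · rintro rfl
    rw [Matrix.mul_assoc, nonsing_inv_mul _ hT', Matrix.mul_one]
  · rintro hMT
    rw [← hMT, Matrix.mul_assoc, mul_nonsing_inv _ hT', Matrix.mul_one]

theorem conjToDiagonal_iff_exists_isUnit_mul_add_eq (hadd : ∀ a b : K, δ (a + b) = δ a + δ b)
    (hmul : ∀ a b : K, δ (a * b) = δ a * b + a * δ b) : ConjToDiagonal δ M ↔
    ∃ (S : Matrix (Fin n) (Fin n) K) (d : Fin n → K),
      IsUnit S ∧ S * M + S.map δ = diagonal d * S := by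
  rw [conjToDiagonal_iff_exists_isUnit_mul_eq]
  constructor
  · rintro ⟨T, d, hT, hMT⟩
    have hT' := (isUnit_iff_isUnit_det T).mp hT
    refine ⟨T⁻¹, d, isUnit_nonsing_inv_iff.mpr hT, ?_⟩
    rwa [← mul_nonsing_inv_eq_iff_of_leibniz δ hadd hmul (isUnit_nonsing_inv_det T hT'),
      nonsing_inv_nonsing_inv T hT']
  · rintro ⟨S, d, hS, hSM⟩
    exact ⟨S⁻¹, d, isUnit_nonsing_inv_iff.mpr hS, (mul_nonsing_inv_eq_iff_of_leibniz δ hadd hmul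
      ((isUnit_iff_isUnit_det S).mp hS) M _).mpr hSM⟩

theorem rightSimple_iff_conjToDiagonal : RightSimple δ M ↔ ConjToDiagonal δ M :=
  (rightSimple_iff_exists_isUnit_mul_eq δ M).trans
    (conjToDiagonal_iff_exists_isUnit_mul_eq δ M).symm

theorem leftSimple_iff_conjToDiagonal (hadd : ∀ a b : K, δ (a + b) = δ a + δ b)
    (hmul : ∀ a b : K, δ (a * b) = δ a * b + a * δ b) : LeftSimple δ M ↔ ConjToDiagonal δ M :=
  (leftSimple_iff_exists_isUnit_mul_add_eq δ M).trans
    (conjToDiagonal_iff_exists_isUnit_mul_add_eq δ M hadd hmul).symm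

end

/-- right simple ↔ conjugate to diagonal ↔ left simple. -/
theorem stmt_12 {K : Type*} [Field K] {n : ℕ} (δ : K → K)
    (hadd : ∀ a b : K, δ (a + b) = δ a + δ b)
    (hmul : ∀ a b : K, δ (a * b) = δ a * b + a * δ b)
    (M : Matrix (Fin n) (Fin n) K) :
    (RightSimple δ M ↔ ConjToDiagonal δ M) ∧
      (LeftSimple δ M ↔ ConjToDiagonal δ M) ∧
      (RightSimple δ M ↔ LeftSimple δ M) := by
  have hright := rightSimple_iff_conjToDiagonal δ M
  have hleft := leftSimple_iff_conjToDiagonal δ M hadd hmul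
  exact ⟨hright, hleft, hright.trans hleft.symm⟩
end

section
/- Let w_i = [u_i; v_i] and w_j = [u_j; v_j] be right eigenvectors of the differential Hamiltonian matrix H = [[A,−R],[−Q,−Aᵀ]] with right eigenvalues λ_i, λ_j respectively. Then the scalar ω := u_i* v_j − v_i* u_j satisfies the differential equation δ_f(ω) + (λ_i* + λ_j)·ω = 0. In particular, if λ_i* and −λ_j are not δ_f-conjugate, then ω = 0, i.e., u_i* v_j = v_i* u_j. -/
/-!
For right eigenvectors `δ x = H x - λ x` and `δ y = H y - μ y`, the Leibniz rule and
`δ ∘ star = star ∘ δ` give `δ (x* J y) = x* (Hᴴ J + J H) y - (λ* + μ) x* J y`. A real Hamiltonian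
matrix has `Hᴴ = Hᵀ` and `Hᵀ J + J H = 0`, and `x* J y = -ω` for Mathlib's `J = [[0, -1], [1, 0]]`,
so `δ ω + (λ* + μ) ω = 0`; a nonzero `ω` then witnesses that `λ*` and `-μ` are `δ`-conjugate.
-/

open Matrix

namespace Derivation

variable {R A ι κ : Type*} [CommRing R] [CommRing A] [Algebra R A] (D : Derivation R A A)

theorem map_J_apply [DecidableEq ι] (i j : ι ⊕ ι) : D (J ι A i j) = 0 := by
  rw [← map_J ι (algebraMap R A), map_apply]
  exact D.map_algebraMap _

variable [Fintype ι]

theorem map_dotProduct (x y : ι → A) : D (x ⬝ᵥ y) = (D ∘ x) ⬝ᵥ y + x ⬝ᵥ (D ∘ y) := by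
  simp only [dotProduct, map_sum, leibniz, smul_eq_mul, Function.comp_apply,
    ← Finset.sum_add_distrib]
  exact Finset.sum_congr rfl fun i _ => by ring

theorem comp_mulVec {M : Matrix κ ι A} (hM : ∀ i j, D (M i j) = 0) (y : ι → A) :
    D ∘ (M *ᵥ y) = M *ᵥ (D ∘ y) := by
  ext i
  have hMi : D ∘ M i = 0 := funext (hM i)
  simp [mulVec, D.map_dotProduct, hMi]

theorem map_star_dotProduct_mulVec_add_mul_eq_zero [StarRing A]
    (hD : ∀ a, D (star a) = star (D a)) {M S : Matrix ι ι A} (hMS : Mᴴ * S = S * -M)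
    (hS : ∀ i j, D (S i j) = 0) {x y : ι → A} {a b : A}
    (hx : M *ᵥ x - D ∘ x = a • x) (hy : M *ᵥ y - D ∘ y = b • y) :
    D (star x ⬝ᵥ S *ᵥ y) + (star a + b) * (star x ⬝ᵥ S *ᵥ y) = 0 := by
  have hDx : D ∘ x = M *ᵥ x - a • x := by rw [← hx, sub_sub_cancel]
  have hDy : D ∘ y = M *ᵥ y - b • y := by rw [← hy, sub_sub_cancel]
  have hDstar : D ∘ star x = star (D ∘ x) := funext fun i => hD (x i)
  have hMx : star (M *ᵥ x) ⬝ᵥ S *ᵥ y = -(star x ⬝ᵥ S *ᵥ (M *ᵥ y)) := by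
    rw [star_mulVec, ← dotProduct_mulVec, mulVec_mulVec, hMS, Matrix.mul_neg, neg_mulVec,
      ← mulVec_mulVec, dotProduct_neg]
  rw [map_dotProduct, hDstar, D.comp_mulVec hS, hDx, hDy, star_sub, star_smul, sub_dotProduct,
    mulVec_sub, dotProduct_sub, hMx, mulVec_smul, smul_dotProduct, dotProduct_smul, smul_eq_mul,
    smul_eq_mul]
  ring

end Derivation

namespace Matrix

theorem conjTranspose_eq_transpose_of_map_star {m n α : Type*} [Star α] {M : Matrix m n α}
    (h : M.map star = M) : Mᴴ = Mᵀ := by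
  rw [conjTranspose, transpose_map, h]

variable {l R : Type*} [Fintype l] [DecidableEq l] [CommRing R]

theorem isSkewAdjoint_J_fromBlocks {A P Q : Matrix l l R} (hP : P.IsSymm) (hQ : Q.IsSymm) :
    (J l R).IsSkewAdjoint (fromBlocks A (-P) (-Q) (-Aᵀ)) := by
  simp [Matrix.IsSkewAdjoint, IsAdjointPair, J, fromBlocks_transpose, fromBlocks_multiply,
    fromBlocks_neg, hP.eq, hQ.eq]

theorem star_sumElim_dotProduct_J_mulVec_sumElim [StarRing R] (u v u' v' : l → R) :
    star (Sum.elim u v) ⬝ᵥ J l R *ᵥ Sum.elim u' v' = star v ⬝ᵥ u' - star u ⬝ᵥ v' := by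
  have hstar : star (Sum.elim u v) = Sum.elim (star u) (star v) := by ext (i | i) <;> rfl
  simp [hstar, J, fromBlocks_mulVec, sumElim_dotProduct_sumElim, neg_mulVec]
  ring

end Matrix

/-- The paper's `δ_f`-conjugacy. -/
def DiffConjugate {K : Type*} [Field K] (δ : K → K) (a b : K) : Prop :=
  ∃ c : K, c ≠ 0 ∧ b = a + δ c / c

theorem diffConjugate_of_add_mul_eq_zero {K : Type*} [Field K] {δ : K → K} {a b c : K}
    (hc : c ≠ 0) (h : δ c + (a - b) * c = 0) : DiffConjugate δ a b :=
  ⟨c, hc, by field_simp; linear_combination -h⟩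

theorem stmt_15_general {K : Type*} [Field K] [StarRing K] {n : ℕ} (δ : K → K)
    (hadd : ∀ a b : K, δ (a + b) = δ a + δ b)
    (hmul : ∀ a b : K, δ (a * b) = δ a * b + a * δ b)
    (hstar : ∀ a : K, δ (star a) = star (δ a))
    (A R Q : Matrix (Fin n) (Fin n) K) (hR : R.IsSymm) (hQ : Q.IsSymm)
    (hAreal : ∀ i j, star (A i j) = A i j)
    (hRreal : ∀ i j, star (R i j) = R i j)
    (hQreal : ∀ i j, star (Q i j) = Q i j)
    (H : Matrix (Fin n ⊕ Fin n) (Fin n ⊕ Fin n) K)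
    (hH : H = Matrix.fromBlocks A (-R) (-Q) (-Aᵀ))
    (ui vi uj vj : Fin n → K) (lami lamj : K)
    (heigi : H.mulVec (Sum.elim ui vi) - (fun k => δ (Sum.elim ui vi k))
      = lami • Sum.elim ui vi)
    (heigj : H.mulVec (Sum.elim uj vj) - (fun k => δ (Sum.elim uj vj k))
      = lamj • Sum.elim uj vj) :
    δ ((fun k => star (ui k)) ⬝ᵥ vj - (fun k => star (vi k)) ⬝ᵥ uj)
        + (star lami + lamj)
          * ((fun k => star (ui k)) ⬝ᵥ vj - (fun k => star (vi k)) ⬝ᵥ uj) = 0 ∧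
      ((¬ ∃ c : K, c ≠ 0 ∧ -lamj = star lami + δ c / c) →
        (fun k => star (ui k)) ⬝ᵥ vj = (fun k => star (vi k)) ⬝ᵥ uj) := by
  let D : Derivation ℤ K K := Derivation.mk' (AddMonoidHom.mk' δ hadd).toIntLinearMap
    fun a b => by simp [hmul]; ring
  have hHreal : H.map star = H := by
    subst hH
    ext (i | i) (j | j) <;> simp [hAreal, hRreal, hQreal]
  have hHamiltonian : Hᴴ * J (Fin n) K = J (Fin n) K * -H := by
    rw [conjTranspose_eq_transpose_of_map_star hHreal, hH]
    exact isSkewAdjoint_J_fromBlocks hR hQ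
  have hform := D.map_star_dotProduct_mulVec_add_mul_eq_zero hstar hHamiltonian D.map_J_apply
    heigi heigj
  have hDδ : ⇑D = δ := rfl
  rw [star_sumElim_dotProduct_J_mulVec_sumElim, ← neg_sub, map_neg, hDδ] at hform
  have hω : δ (star ui ⬝ᵥ vj - star vi ⬝ᵥ uj)
      + (star lami + lamj) * (star ui ⬝ᵥ vj - star vi ⬝ᵥ uj) = 0 := by
    linear_combination -hform
  refine ⟨hω, fun hnc => by_contra fun hne => hnc ?_⟩
  exact diffConjugate_of_add_mul_eq_zero (sub_ne_zero.mpr hne) (by rwa [sub_neg_eq_add])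

/-- for right eigenvectors `wᵢ = [uᵢ; vᵢ]`, `w_j = [u_j; v_j]` of
the Hamiltonian matrix `H` with eigenvalues `λᵢ, λ_j`, the scalar
`ω = uᵢ* v_j − vᵢ* u_j` satisfies `δ_f(ω) + (λᵢ* + λ_j) ω = 0`; hence if `λᵢ*`
and `−λ_j` are not `δ_f`-conjugate, `ω = 0`. -/
theorem stmt_15 {K : Type*} [Field K] [StarRing K] {n : ℕ} (δ : K → K)
    (hadd : ∀ a b : K, δ (a + b) = δ a + δ b)
    (hmul : ∀ a b : K, δ (a * b) = δ a * b + a * δ b)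
    (hstar : ∀ a : K, δ (star a) = star (δ a))
    (A R Q : Matrix (Fin n) (Fin n) K) (hR : R.IsSymm) (hQ : Q.IsSymm)
    (hAreal : ∀ i j, star (A i j) = A i j)
    (hRreal : ∀ i j, star (R i j) = R i j)
    (hQreal : ∀ i j, star (Q i j) = Q i j)
    (H : Matrix (Fin n ⊕ Fin n) (Fin n ⊕ Fin n) K)
    (hH : H = Matrix.fromBlocks A (-R) (-Q) (-Aᵀ))
    (ui vi uj vj : Fin n → K) (lami lamj : K)
    (hwi : Sum.elim ui vi ≠ 0) (hwj : Sum.elim uj vj ≠ 0)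
    (heigi : H.mulVec (Sum.elim ui vi) - (fun k => δ (Sum.elim ui vi k))
      = lami • Sum.elim ui vi)
    (heigj : H.mulVec (Sum.elim uj vj) - (fun k => δ (Sum.elim uj vj k))
      = lamj • Sum.elim uj vj) :
    δ ((fun k => star (ui k)) ⬝ᵥ vj - (fun k => star (vi k)) ⬝ᵥ uj)
        + (star lami + lamj)
          * ((fun k => star (ui k)) ⬝ᵥ vj - (fun k => star (vi k)) ⬝ᵥ uj) = 0 ∧
      ((¬ ∃ c : K, c ≠ 0 ∧ -lamj = star lami + δ c / c) →
        (fun k => star (ui k)) ⬝ᵥ vj = (fun k => star (vi k)) ⬝ᵥ uj) :=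
  stmt_15_general δ hadd hmul hstar A R Q hR hQ hAreal hRreal hQreal H hH ui vi uj vj lami lamj
    heigi heigj
end

section
/- Suppose U, V, Λ ∈ K^{n×n} satisfy H[U;V] − [δ_f(U);δ_f(V)] = [U;V]Λ with H = [[A,−R],[−Q,−Aᵀ]]. Then the matrix V*U satisfies the differential Lyapunov-type equation δ_f(V*U) + V*UΛ + Λ*V*U = −V*RV − U*QU. (Obtained by multiplying the upper block equation by V* and the conjugate of the lower block equation by U* and adding.) -/
/-!
Differentiate `V* U` by the Leibniz rule, using that `δ` commutes with `*`, and substitute the two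
block equations for `δ(U)` and `δ(V)`. Since `A` and `Q` are real and `Q` is symmetric, the
conjugate transpose of the lower equation contributes `-U* Q U - V* A U - Λ* V* U`, whose
`V* A U` cancels the one coming from the upper equation.
-/

open Matrix

namespace Matrix

variable {m n α : Type*}

theorem conjTranspose_eq_transpose_of_forall_star_eq [Star α] {M : Matrix m n α}
    (hM : ∀ i j, star (M i j) = M i j) : Mᴴ = Mᵀ :=
  Matrix.ext fun i j => hM j i

theorem map_conjTranspose_mul [Fintype n] [Ring α] [StarRing α] (δ : α → α)
    (hLeib : ∀ A B : Matrix n n α, (A * B).map δ = A.map δ * B + A * B.map δ)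
    (hstar : ∀ a : α, δ (star a) = star (δ a)) (U V : Matrix n n α) :
    (Vᴴ * U).map δ = (V.map δ)ᴴ * U + Vᴴ * U.map δ := by
  rw [hLeib, conjTranspose_map δ hstar]

end Matrix

theorem stmt_17_general {K : Type*} [Field K] [StarRing K] {n : ℕ} (δ : K → K)
    (hLeib : ∀ A B : Matrix (Fin n) (Fin n) K,
      (A * B).map δ = A.map δ * B + A * B.map δ)
    (hstar : ∀ a : K, δ (star a) = star (δ a))
    (A R Q : Matrix (Fin n) (Fin n) K) (hQ : Q.IsSymm)
    (hAreal : ∀ i j, star (A i j) = A i j)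
    (hQreal : ∀ i j, star (Q i j) = Q i j)
    (U V Λ : Matrix (Fin n) (Fin n) K)
    (hblk1 : A * U - R * V - U.map δ = U * Λ)
    (hblk2 : -(Q * U) - Aᵀ * V - V.map δ = V * Λ) :
    (Vᴴ * U).map δ + Vᴴ * U * Λ + Λᴴ * (Vᴴ * U) = -(Vᴴ * R * V) - Uᴴ * Q * U := by
  have hU : U.map δ = A * U - R * V - U * Λ := by rw [← hblk1]; abel
  have hV : V.map δ = -(Q * U) - Aᵀ * V - V * Λ := by rw [← hblk2]; abel
  have hAT : (Aᵀ)ᴴ = A :=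
    conjTranspose_eq_transpose_of_forall_star_eq (M := Aᵀ) (fun i j => hAreal j i)
  have hQH : Qᴴ = Q := (conjTranspose_eq_transpose_of_forall_star_eq hQreal).trans hQ.eq
  rw [map_conjTranspose_mul δ hLeib hstar, hU, hV]
  simp only [conjTranspose_sub, conjTranspose_neg, conjTranspose_mul, hAT, hQH]
  noncomm_ring

/-- under the block equation, `V* U` satisfies the differential
Lyapunov-type equation
`δ_f(V*U) + V*U Λ + Λ* V*U = − V* R V − U* Q U`. -/
theorem stmt_17 {K : Type*} [Field K] [StarRing K] {n : ℕ} (δ : K → K)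
    (hLeib : ∀ A B : Matrix (Fin n) (Fin n) K,
      (A * B).map δ = A.map δ * B + A * B.map δ)
    (hstar : ∀ a : K, δ (star a) = star (δ a))
    (A R Q : Matrix (Fin n) (Fin n) K) (hR : R.IsSymm) (hQ : Q.IsSymm)
    (hAreal : ∀ i j, star (A i j) = A i j)
    (hRreal : ∀ i j, star (R i j) = R i j)
    (hQreal : ∀ i j, star (Q i j) = Q i j)
    (U V Λ : Matrix (Fin n) (Fin n) K)
    (hblk1 : A * U - R * V - U.map δ = U * Λ)
    (hblk2 : -(Q * U) - Aᵀ * V - V.map δ = V * Λ) :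
    (Vᴴ * U).map δ + Vᴴ * U * Λ + Λᴴ * (Vᴴ * U) = -(Vᴴ * R * V) - Uᴴ * Q * U :=
  stmt_17_general δ hLeib hstar A R Q hQ hAreal hQreal U V Λ hblk1 hblk2
end
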